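/- Assume the index sets are ordered, i.e. I1 = {1,…,l} and I0 = {l+1,…,n}, and let ψ(c,y) ≡ T^{−1}(f(c,y)) be the source decoder induced by the MAP SC decoder f. Then for every decoder φ : 𝒳^l × 𝒴^n → 𝒳^n, Prob(ψ(AX,Y) ≠ X) ≤ n · Prob(φ(AX,Y) ≠ X). -/
import Mathlib


open Finset

noncomputable def probOf {Ω : Type*} [Fintype Ω] (p : Ω → ℝ) (E : Set Ω) : ℝ :=
  ∑ ω, E.indicator p ω

noncomputable def condProb {Ω : Type*} [Fintype Ω] (p : Ω → ℝ) (E F : Set Ω) : ℝ :=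
  probOf p (E ∩ F) / probOf p F

noncomputable def entropyOf {Ω Z : Type*} [Fintype Ω] [Fintype Z] (p : Ω → ℝ) (V : Ω → Z) : ℝ :=
  ∑ z, Real.negMulLog (probOf p {ω | V ω = z})

noncomputable def condEntropyOf {Ω U V : Type*} [Fintype Ω] [Fintype U] [Fintype V]
    (p : Ω → ℝ) (Uv : Ω → U) (Vv : Ω → V) : ℝ :=
  entropyOf p (fun ω => (Uv ω, Vv ω)) - entropyOf p Vv

def prefixVec {𝒳 : Type*} {n : ℕ} (c : Fin n → 𝒳) (m : ℕ) (h : m ≤ n) : Fin m → 𝒳 :=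
  fun k => c ⟨k.1, lt_of_lt_of_le k.2 h⟩

def scVecGo {𝒳 : Type*} {n : ℕ} (g : (i : Fin n) → (Fin i.1 → 𝒳) → 𝒳) :
    (k : ℕ) → k < n → 𝒳
  | k, hk => g ⟨k, hk⟩ (fun j => scVecGo g j.1 (j.2.trans hk))
termination_by k _ => k
decreasing_by exact j.2

def scVec {𝒳 : Type*} {n : ℕ} (g : (i : Fin n) → (Fin i.1 → 𝒳) → 𝒳) : Fin n → 𝒳 :=
  fun i => scVecGo g i.1 i.2

def scDec {𝒳 𝒴 : Type*} {n l : ℕ}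
    (I1 : Finset (Fin n)) (hc1 : I1.card = l)
    (f : (i : Fin n) → (Fin i.1 → 𝒳) → (Fin n → 𝒴) → 𝒳)
    (c : Fin l → 𝒳) (y : Fin n → 𝒴) : Fin n → 𝒳 :=
  scVec (fun i pref => if h : i ∈ I1 then c ((I1.orderIsoOfFin hc1).symm ⟨i, h⟩) else f i pref y)

def scDecOrd {𝒳 𝒴 : Type*} {n l : ℕ}
    (f : (i : Fin n) → (Fin i.1 → 𝒳) → (Fin n → 𝒴) → 𝒳)
    (c : Fin l → 𝒳) (y : Fin n → 𝒴) : Fin n → 𝒳 :=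
  scVec (fun i pref => if h : i.1 < l then c ⟨i.1, h⟩ else f i pref y)

section aux
variable {Ω : Type*} [Fintype Ω] {p : Ω → ℝ}

lemma probOf_nonneg (h0 : ∀ ω, 0 ≤ p ω) (E : Set Ω) : 0 ≤ probOf p E :=
  Finset.sum_nonneg fun ω _ => Set.indicator_nonneg (fun a _ => h0 a) ω

lemma probOf_mono (h0 : ∀ ω, 0 ≤ p ω) {E F : Set Ω} (h : E ⊆ F) :
    probOf p E ≤ probOf p F :=
  Finset.sum_le_sum fun ω _ => by
    classical
    simp only [Set.indicator_apply]
    split_ifs with h1 h2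
    · exact le_refl _
    · exact absurd (h h1) h2
    · exact h0 ω
    · exact le_refl _

lemma probOf_union_le (h0 : ∀ ω, 0 ≤ p ω) (E F : Set Ω) :
    probOf p (E ∪ F) ≤ probOf p E + probOf p F := by
  classical
  unfold probOf
  rw [← Finset.sum_add_distrib]
  refine Finset.sum_le_sum fun ω _ => ?_
  simp only [Set.indicator_apply, Set.mem_union]
  split_ifs <;> first
    | linarith [h0 ω]
    | tauto

lemma probOf_biUnion_le (h0 : ∀ ω, 0 ≤ p ω) {ι : Type*} [DecidableEq ι] (s : Finset ι)
    (E : ι → Set Ω) : probOf p (⋃ i ∈ s, E i) ≤ ∑ i ∈ s, probOf p (E i) := by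
  induction s using Finset.induction with
  | empty => simp [probOf]
  | @insert a s ha ih =>
    rw [Finset.sum_insert ha, Finset.set_biUnion_insert]
    have := probOf_union_le h0 (E a) (⋃ i ∈ s, E i) (p := p)
    linarith

lemma probOf_split (E F : Set Ω) :
    probOf p (E ∩ F) + probOf p (Eᶜ ∩ F) = probOf p F := by
  classical
  unfold probOf
  rw [← Finset.sum_add_distrib]
  refine Finset.sum_congr rfl fun ω _ => ?_
  simp only [Set.indicator_apply, Set.mem_inter_iff, Set.mem_compl_iff]
  split_ifs <;> first | tauto | ring

lemma probOf_fiber {Z : Type*} [Fintype Z] [DecidableEq Z] (E : Set Ω) (V : Ω → Z) :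
    probOf p E = ∑ z, probOf p (E ∩ {ω | V ω = z}) := by
  classical
  unfold probOf
  rw [Finset.sum_comm]
  refine Finset.sum_congr rfl fun ω _ => ?_
  rw [Finset.sum_eq_single (V ω)]
  · by_cases hE : ω ∈ E
    · rw [Set.indicator_of_mem hE,
        Set.indicator_of_mem (show ω ∈ E ∩ {ω' | V ω' = V ω} from ⟨hE, rfl⟩)]
    · rw [Set.indicator_of_notMem hE,
        Set.indicator_of_notMem (show ω ∉ E ∩ {ω' | V ω' = V ω} from fun h => hE h.1)]
  · intro z _ hz
    apply Set.indicator_of_notMem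
    rintro ⟨-, h2⟩
    exact hz h2.symm
  · exact fun h => absurd (Finset.mem_univ _) h

lemma scVec_eq {𝒳 : Type*} {n : ℕ} (g : (i : Fin n) → (Fin i.1 → 𝒳) → 𝒳) (i : Fin n) :
    scVec g i = g i (fun j => scVec g ⟨j.1, j.2.trans i.2⟩) := by
  show scVecGo g i.1 i.2 = _
  rw [scVecGo]
  rfl

end aux

/-- for ordered index sets and the MAP SC decoder `f`, the induced source
decoder `ψ(c,y) = T⁻¹(f(c,y))` satisfies `Prob(ψ(AX,Y) ≠ X) ≤ n · Prob(φ(AX,Y) ≠ X)`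
for every decoder `φ`. -/
theorem stmt4
    {𝒳 𝒴 : Type*} [Fintype 𝒳] [Fintype 𝒴]
    (hcard : 2 ≤ Fintype.card 𝒳)
    (n l : ℕ) (hl : l ≤ n)
    (μ : ((Fin n → 𝒳) × (Fin n → 𝒴)) → ℝ)
    (hμ0 : ∀ ω, 0 ≤ μ ω) (hμ1 : ∑ ω, μ ω = 1)
    (A : (Fin n → 𝒳) → (Fin l → 𝒳)) (B : (Fin n → 𝒳) → (Fin (n - l) → 𝒳))
    (T : (Fin n → 𝒳) ≃ (Fin n → 𝒳))
    (hT1 : ∀ x (j : Fin l), T x (Fin.castLE hl j) = A x j)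
    (hT0 : ∀ x (j : Fin (n - l)), T x ⟨l + j.1, by have := j.2; omega⟩ = B x j)
    (f : (i : Fin n) → (Fin i.1 → 𝒳) → (Fin n → 𝒴) → 𝒳)
    (hMAP : ∀ (i : Fin n), l ≤ i.1 → ∀ (cp : Fin i.1 → 𝒳) (y : Fin n → 𝒴),
      0 < probOf μ {ω | prefixVec (T ω.1) i.1 i.2.le = cp ∧ ω.2 = y} →
      ∀ a : 𝒳,
        condProb μ {ω | T ω.1 i = a} {ω | prefixVec (T ω.1) i.1 i.2.le = cp ∧ ω.2 = y} ≤
          condProb μ {ω | T ω.1 i = f i cp y}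
            {ω | prefixVec (T ω.1) i.1 i.2.le = cp ∧ ω.2 = y})
    (φ : (Fin l → 𝒳) → (Fin n → 𝒴) → (Fin n → 𝒳)) :
    probOf μ {ω | T.symm (scDecOrd f (A ω.1) ω.2) ≠ ω.1} ≤
      (n : ℝ) * probOf μ {ω | φ (A ω.1) ω.2 ≠ ω.1} := by
  classical
  set Err : Set ((Fin n → 𝒳) × (Fin n → 𝒴)) := {ω | φ (A ω.1) ω.2 ≠ ω.1} with hErr
  have hP0 : 0 ≤ probOf μ Err := probOf_nonneg hμ0 _
  set E : Fin n → Set ((Fin n → 𝒳) × (Fin n → 𝒴)) :=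
    fun i => {ω | f i (prefixVec (T ω.1) i.1 i.2.le) ω.2 ≠ T ω.1 i} with hE
  set s : Finset (Fin n) := Finset.univ.filter (fun i => l ≤ i.1) with hs
  -- Step 1 : error event of the SC decoder is contained in the union of the genie events
  have hsub : {ω : (Fin n → 𝒳) × (Fin n → 𝒴) | T.symm (scDecOrd f (A ω.1) ω.2) ≠ ω.1}
      ⊆ ⋃ i ∈ s, E i := by
    intro ω hω
    by_contra hnot
    simp only [Set.mem_iUnion, exists_prop, not_exists, not_and] at hnot
    have hcorr : ∀ i : Fin n, l ≤ i.1 →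
        f i (prefixVec (T ω.1) i.1 i.2.le) ω.2 = T ω.1 i := by
      intro i hi
      have h1 : ω ∉ E i := hnot i (Finset.mem_filter.mpr ⟨Finset.mem_univ i, hi⟩)
      simpa [hE, not_not] using h1
    have key : ∀ k, ∀ hk : k < n, scDecOrd f (A ω.1) ω.2 ⟨k, hk⟩ = T ω.1 ⟨k, hk⟩ := by
      intro k
      induction k using Nat.strong_induction_on with
      | _ k ih =>
        intro hk
        rw [scDecOrd, scVec_eq]
        simp only
        by_cases hkl : k < l
        · rw [dif_pos hkl]
          exact (hT1 ω.1 ⟨k, hkl⟩).symm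
        · rw [dif_neg hkl]
          have hpref : (fun j : Fin k =>
              scVec (fun i pref => if h : i.1 < l then A ω.1 ⟨i.1, h⟩ else f i pref ω.2)
                ⟨j.1, j.2.trans hk⟩) = prefixVec (T ω.1) k hk.le := by
            funext j
            exact ih j.1 j.2 (j.2.trans hk)
          rw [hpref]
          exact hcorr ⟨k, hk⟩ (le_of_not_gt hkl)
    apply hω
    have : scDecOrd f (A ω.1) ω.2 = T ω.1 := by
      funext i
      have := key i.1 i.2
      simpa using this
    simp only [Set.mem_setOf_eq, this, Equiv.symm_apply_apply, ne_eq, not_not]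
  -- Step 3 : each genie event is at most the error probability of φ
  have step3 : ∀ i : Fin n, l ≤ i.1 → probOf μ (E i) ≤ probOf μ Err := by
    intro i hi
    set V : ((Fin n → 𝒳) × (Fin n → 𝒴)) → (Fin i.1 → 𝒳) × (Fin n → 𝒴) :=
      fun ω => (prefixVec (T ω.1) i.1 i.2.le, ω.2) with hV
    rw [probOf_fiber (E i) V, probOf_fiber Err V]
    refine Finset.sum_le_sum fun z _ => ?_
    obtain ⟨cp, y⟩ := z
    set F : Set ((Fin n → 𝒳) × (Fin n → 𝒴)) := {ω | V ω = (cp, y)} with hF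
    have hFeq : F = {ω | prefixVec (T ω.1) i.1 i.2.le = cp ∧ ω.2 = y} := by
      ext ω
      simp [hF, hV, Prod.ext_iff]
    set gv : 𝒳 := T (φ (fun j : Fin l => cp ⟨j.1, lt_of_lt_of_le j.2 hi⟩) y) i with hgv
    have hEF : E i ∩ F = {ω | T ω.1 i = f i cp y}ᶜ ∩ F := by
      ext ω
      simp only [hE, hF, hV, Set.mem_inter_iff, Set.mem_setOf_eq, Set.mem_compl_iff,
        Prod.mk.injEq]
      constructor
      · rintro ⟨h1, h2, h3⟩
        rw [h2, h3] at h1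
        exact ⟨fun h => h1 h.symm, h2, h3⟩
      · rintro ⟨h1, h2, h3⟩
        refine ⟨?_, h2, h3⟩
        rw [h2, h3]
        exact fun h => h1 h.symm
    have hb : probOf μ ({ω | T ω.1 i = gv} ∩ F) ≤ probOf μ ({ω | T ω.1 i = f i cp y} ∩ F) := by
      rcases lt_or_ge 0 (probOf μ F) with hpos | hle
      · have hpos' : 0 < probOf μ {ω : (Fin n → 𝒳) × (Fin n → 𝒴) |
            prefixVec (T ω.1) i.1 i.2.le = cp ∧ ω.2 = y} := by rw [← hFeq]; exact hpos
        have hm := hMAP i hi cp y hpos' gv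
        unfold condProb at hm
        rw [← hFeq] at hm
        exact (div_le_div_iff_of_pos_right hpos).mp hm
      · have h0F : probOf μ F = 0 := le_antisymm hle (probOf_nonneg hμ0 F)
        have h1 : probOf μ ({ω | T ω.1 i = gv} ∩ F) ≤ 0 := by
          rw [← h0F]
          exact probOf_mono hμ0 Set.inter_subset_right
        have h2 : 0 ≤ probOf μ ({ω | T ω.1 i = f i cp y} ∩ F) := probOf_nonneg hμ0 _
        linarith
    have hs1 := probOf_split (p := μ) {ω | T ω.1 i = f i cp y} F
    have hs2 := probOf_split (p := μ) {ω | T ω.1 i = gv} F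
    have hkey : probOf μ ({ω | T ω.1 i = f i cp y}ᶜ ∩ F)
        ≤ probOf μ ({ω | T ω.1 i = gv}ᶜ ∩ F) := by linarith
    have hsub2 : {ω : (Fin n → 𝒳) × (Fin n → 𝒴) | T ω.1 i = gv}ᶜ ∩ F ⊆ Err ∩ F := by
      rintro ω ⟨h1, h2⟩
      refine ⟨?_, h2⟩
      have hcp : prefixVec (T ω.1) i.1 i.2.le = cp := congrArg Prod.fst h2
      have hy : ω.2 = y := congrArg Prod.snd h2
      have hA : (fun j : Fin l => cp ⟨j.1, lt_of_lt_of_le j.2 hi⟩) = A ω.1 := by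
        funext j
        rw [← hcp]
        exact hT1 ω.1 j
      intro hφ
      apply h1
      show T ω.1 i = gv
      rw [hgv]
      have : φ (fun j : Fin l => cp ⟨j.1, lt_of_lt_of_le j.2 hi⟩) y = ω.1 := by
        rw [hA, ← hy]; exact hφ
      rw [this]
    calc probOf μ (E i ∩ {ω | V ω = (cp, y)})
        = probOf μ ({ω | T ω.1 i = f i cp y}ᶜ ∩ F) := by rw [← hF, hEF]
      _ ≤ probOf μ ({ω | T ω.1 i = gv}ᶜ ∩ F) := hkey
      _ ≤ probOf μ (Err ∩ F) := probOf_mono hμ0 hsub2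
      _ = probOf μ (Err ∩ {ω | V ω = (cp, y)}) := by rw [hF]
  -- put things together
  calc probOf μ {ω : (Fin n → 𝒳) × (Fin n → 𝒴) | T.symm (scDecOrd f (A ω.1) ω.2) ≠ ω.1}
      ≤ probOf μ (⋃ i ∈ s, E i) := probOf_mono hμ0 hsub
    _ ≤ ∑ i ∈ s, probOf μ (E i) := probOf_biUnion_le hμ0 s E
    _ ≤ ∑ i ∈ s, probOf μ Err := Finset.sum_le_sum fun i hi =>
        step3 i (Finset.mem_filter.mp hi).2
    _ ≤ ∑ _i : Fin n, probOf μ Err :=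
        Finset.sum_le_sum_of_subset_of_nonneg (Finset.subset_univ s) fun _ _ _ => hP0
    _ = (n : ℝ) * probOf μ Err := by
        rw [Finset.sum_const, Finset.card_univ, Fintype.card_fin, nsmul_eq_mul]
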